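/- Let F be a maximum matching of G, K = E(G)\F, and (Q,R,S) a Gallai–Edmonds decomposition with OR(K,F) = S ∪ ⋃_i(V(H_i)\{r_i}). Then an edge e on V(G) not in E(G) is enriching (i.e., OR(K ∪ {e}, F) strictly contains OR(K,F)) if and only if e connects V(H_i) to V(H_k) for distinct components i ≠ k, or connects some V(H_i) to Q. -/

import Mathlib

variable {V : Type*}

/-- A matching: a set of non-loop edges that are pairwise vertex-disjoint. -/
def IsMatching (M : Set (Sym2 V)) : Prop :=
  (∀ e ∈ M, ¬ e.IsDiag) ∧ ∀ e ∈ M, ∀ f ∈ M, e ≠ f → ∀ v, v ∈ e → v ∉ f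

/-- A vertex is covered by an edge set if it belongs to some edge. -/
def covered (M : Set (Sym2 V)) (v : V) : Prop := ∃ e ∈ M, v ∈ e

/-- A `K`–`F`-alternating path: a (simple) nonempty list of vertices whose
odd-numbered edges (0-indexed: even positions) lie in `K` and even-numbered edges lie in `F`. -/
def AltPath (K F : Set (Sym2 V)) (p : List V) : Prop :=
  p ≠ [] ∧ p.Nodup ∧ ∀ i, ∀ h : i + 1 < p.length,
    s(p[i]'(Nat.lt_of_succ_lt h), p[i+1]'h) ∈ (if i % 2 = 0 then K else F)


/-- `x` is evenly `K`-reachable from `a`: there is a `K`–`F`-alternating path from `a` to `x`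
with an even number of edges (an odd number of vertices); `x = a` via the empty path. -/
def evenReach (K F : Set (Sym2 V)) (a x : V) : Prop :=
  ∃ (p : List V) (hp : p ≠ []), AltPath K F p ∧ p.head hp = a ∧ p.getLast hp = x ∧
    Odd p.length

/-- `x` is oddly `K`-reachable from `a`: there is a `K`–`F`-alternating path from `a` to `x`
with an odd number of edges (an even, positive, number of vertices). -/
def oddReach (K F : Set (Sym2 V)) (a x : V) : Prop :=
  ∃ (p : List V) (hp : p ≠ []), AltPath K F p ∧ p.head hp = a ∧ p.getLast hp = x ∧
    Even p.length


/-- A maximum matching of the graph with edge set `E`. -/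
def IsMaxMatching (E F : Set (Sym2 V)) : Prop :=
  F ⊆ E ∧ IsMatching F ∧ ∀ M ⊆ E, IsMatching M → M.ncard ≤ F.ncard

/-- The edges of `F` contained in the vertex set `C` (the induced edge set `F[C]`). -/
def edgesIn (F : Set (Sym2 V)) (C : Set V) : Set (Sym2 V) := {e ∈ F | ∀ u ∈ e, u ∈ C}

/-- The edges of `E` avoiding the vertex set `S` (edges of `G − S`). -/
def avoid (E : Set (Sym2 V)) (S : Set V) : Set (Sym2 V) := {e ∈ E | ∀ u ∈ e, u ∉ S}

/-- The connected component of `v` in the graph with edge set `E'`. -/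
def comp (E' : Set (Sym2 V)) (v : V) : Set V :=
  {u | Relation.ReflTransGen (fun a b => s(a, b) ∈ E') v u}

/-- The induced subgraph on `C` is hypomatchable (factor-critical): for every `v ∈ C` there
is a matching inside `C` covering exactly `C \ {v}`. -/
def Hypomatchable (E : Set (Sym2 V)) (C : Set V) : Prop :=
  ∀ v ∈ C, ∃ M ⊆ edgesIn E C, IsMatching M ∧ ¬ covered M v ∧
    ∀ u ∈ C, u ≠ v → covered M u

/-- A Gallai–Edmonds decomposition `(Q, R, S)` of the graph `E` with respect to the maximum
matching `F`: (1) `F[Q]` is a perfect matching of `Q`; (2) `R` is a union of connected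
components of `G − S`, each hypomatchable and matched by `F` within itself except for exactly
one exposed vertex (its `r_i`); (3) every `s ∈ S` is matched by `F` to the exposed vertex
`r_i` of some component. -/
def IsGE (E F : Set (Sym2 V)) (Q R S : Set V) : Prop :=
  Q ∪ R ∪ S = Set.univ ∧ Disjoint Q R ∧ Disjoint Q S ∧ Disjoint R S ∧
  (∀ v ∈ Q, covered (edgesIn F Q) v) ∧
  (∀ v ∈ R, comp (avoid E S) v ⊆ R ∧ Hypomatchable E (comp (avoid E S) v) ∧
    (∃! w, w ∈ comp (avoid E S) v ∧ ¬ covered (edgesIn F (comp (avoid E S) v)) w)) ∧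
  (∀ s ∈ S, ∃ t, s(s, t) ∈ F ∧ t ∈ R ∧ ¬ covered (edgesIn F (comp (avoid E S) t)) t)

/-- `ER(K,F)`: the set of vertices evenly `K`-reachable from some `F`-uncovered vertex. -/
def ERset (K F : Set (Sym2 V)) : Set V := {x | ∃ a, ¬ covered F a ∧ evenReach K F a x}

/-- `OR(K,F)`: the set of vertices oddly `K`-reachable from some `F`-uncovered vertex. -/
def ORset (K F : Set (Sym2 V)) : Set V := {x | ∃ a, ¬ covered F a ∧ oddReach K F a x}


/-!
Every edge of `K = E \ F` leaving `R` ends in `S` or stays inside its component of `G − S`, and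
`K ∪ {e}` keeps this property unless `e` joins two components or a component to `Q`. Under it,
an alternating path from an exposed vertex never visits `Q`, reaches `S` only by `K`-edges, and
enters each component `H_i` through `r_i`; being simple, it can reach a vertex of `H_i` by a
`K`-edge only when that vertex is matched inside `H_i`. So `OR` stays inside
`S ∪ ⋃ (V(H_i) \ {r_i}) = OR(K, F)`.

Conversely, `r_i` is reached by an even alternating path (it is exposed, or its `F`-partner lies
in `S ⊆ OR(K, F)`), and since `H_i` is factor-critical every vertex of `H_i` is reached from
`r_i` by an even alternating path inside `H_i`: follow the symmetric difference of `F[H_i]` and a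
matching of `H_i` missing that vertex. Crossing `e` then reaches a vertex of `Q`, or the exposed
vertex `r_k` of another component, and neither lies in `OR(K, F)`.
-/

namespace IsMatching

variable {M : Set (Sym2 V)}

lemma partner_unique (hM : IsMatching M) {w z₁ z₂ : V} (h₁ : s(w, z₁) ∈ M)
    (h₂ : s(w, z₂) ∈ M) : z₁ = z₂ := by
  by_cases h : s(w, z₁) = s(w, z₂)
  · rcases Sym2.eq_iff.mp h with ⟨-, h⟩ | ⟨h₁', h₂'⟩
    · exact h
    · exact h₂'.trans h₁'
  · simpa using hM.2 _ h₁ _ h₂ h w (by simp)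

lemma ne_of_mk_mem (hM : IsMatching M) {w z : V} (h : s(w, z) ∈ M) : w ≠ z := by
  rintro rfl
  exact hM.1 _ h (Sym2.mk_isDiag_iff.mpr rfl)

lemma of_subset (hM : IsMatching M) {M' : Set (Sym2 V)} (h : M' ⊆ M) : IsMatching M' :=
  ⟨fun e he => hM.1 e (h he), fun e he f hf hef v hv => hM.2 e (h he) f (h hf) hef v hv⟩

end IsMatching

lemma exists_mk_mem_of_covered {M : Set (Sym2 V)} {w : V} (h : covered M w) :
    ∃ z, s(w, z) ∈ M := by
  obtain ⟨e, he, hwe⟩ := h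
  obtain ⟨z, rfl⟩ := Sym2.mem_iff_exists.mp hwe
  exact ⟨z, he⟩

lemma covered_of_mk_mem {M : Set (Sym2 V)} {w z : V} (h : s(w, z) ∈ M) : covered M w :=
  ⟨_, h, Sym2.mem_mk_left w z⟩

lemma covered_mono {M M' : Set (Sym2 V)} (h : M ⊆ M') {w : V} (hw : covered M w) :
    covered M' w :=
  let ⟨e, he, hwe⟩ := hw
  ⟨e, h he, hwe⟩

lemma edgesIn_subset (F : Set (Sym2 V)) (C : Set V) : edgesIn F C ⊆ F := fun _ he => he.1

section comp

variable {E' : Set (Sym2 V)} {v w x : V}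

lemma mem_comp_self (E' : Set (Sym2 V)) (v : V) : v ∈ comp E' v := Relation.ReflTransGen.refl

lemma mem_comp_of_mk_mem (h : s(v, w) ∈ E') : w ∈ comp E' v := Relation.ReflTransGen.single h

lemma mem_comp_trans (h : w ∈ comp E' v) (h' : x ∈ comp E' w) : x ∈ comp E' v :=
  Relation.ReflTransGen.trans h h'

lemma mem_comp_comm (h : w ∈ comp E' v) : v ∈ comp E' w := by
  have : Std.Symm (fun a b => s(a, b) ∈ E') := ⟨fun a b hab => by rwa [Sym2.eq_swap]⟩
  exact Relation.ReflTransGen.stdSymm.symm _ _ h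

lemma comp_eq_of_mem (h : w ∈ comp E' v) : comp E' w = comp E' v :=
  Set.ext fun _ => ⟨mem_comp_trans h, mem_comp_trans (mem_comp_comm h)⟩

end comp

namespace List

lemma getElem_append_tail {p q : List V} (hp : p ≠ []) (hq : q ≠ [])
    (hj : q.head hq = p.getLast hp) {t : ℕ} (ht : p.length - 1 ≤ t)
    (htl : t < (p ++ q.tail).length) :
    (p ++ q.tail)[t] = q[t - (p.length - 1)]'(by
      have := List.length_pos_iff.mpr hq; simp at htl; omega) := by
  have hpl : 0 < p.length := List.length_pos_iff.mpr hp
  rcases Nat.lt_or_ge t p.length with hlt | hge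
  · obtain rfl : t = p.length - 1 := by omega
    rw [List.getElem_append_left hlt, ← List.getLast_eq_getElem hp, ← hj]
    simp [List.head_eq_getElem_zero]
  · rw [List.getElem_append_right hge, List.getElem_tail]
    congr 1
    omega

lemma getLast_append_tail {p q : List V} (hp : p ≠ []) (hq : q ≠ [])
    (hj : q.head hq = p.getLast hp) :
    (p ++ q.tail).getLast (by simp [hp]) = q.getLast hq := by
  obtain ⟨a, l, rfl⟩ := List.exists_cons_of_ne_nil hq
  cases l with
  | nil => simpa using hj.symm
  | cons b l => simp [List.getLast_append_of_ne_nil]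

lemma mem_or_mem_of_mem_append_tail {p q : List V} {x : V} (hx : x ∈ p ++ q.tail) :
    x ∈ p ∨ x ∈ q :=
  (List.mem_append.mp hx).imp_right List.mem_of_mem_tail

end List

namespace AltPath

variable {K F : Set (Sym2 V)} {p q : List V} {z : V}

lemma getElem_eq_getElem_iff (h : AltPath K F p) {i j : ℕ} (hi : i < p.length)
    (hj : j < p.length) : p[i] = p[j] ↔ i = j :=
  h.2.1.getElem_inj_iff

lemma mk_mem_of_even (h : AltPath K F p) {i : ℕ} (hi : i + 1 < p.length) (he : i % 2 = 0) :
    s(p[i], p[i + 1]) ∈ K := by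
  simpa [he] using h.2.2 i hi

lemma mk_mem_of_odd (h : AltPath K F p) {i : ℕ} (hi : i + 1 < p.length) (ho : i % 2 = 1) :
    s(p[i], p[i + 1]) ∈ F := by
  simpa [ho] using h.2.2 i hi

lemma singleton (K F : Set (Sym2 V)) (a : V) : AltPath K F [a] :=
  ⟨by simp, by simp, fun i h => absurd h (by simp)⟩

lemma mono {K' F' : Set (Sym2 V)} (hK : K ⊆ K') (hF : F ⊆ F') (h : AltPath K F p) :
    AltPath K' F' p := by
  refine ⟨h.1, h.2.1, fun i hi => ?_⟩
  have := h.2.2 i hi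
  split_ifs at this ⊢
  exacts [hK this, hF this]

lemma take (h : AltPath K F p) {n : ℕ} (hn : 0 < n) : AltPath K F (p.take n) := by
  refine ⟨?_, h.2.1.sublist (List.take_sublist n p), fun i hi => ?_⟩
  · simpa [List.take_eq_nil_iff, hn.ne'] using h.1
  · simpa using h.2.2 i (by simp at hi; omega)

lemma concat (h : AltPath K F p) (hz : z ∉ p)
    (hedge : s(p.getLast h.1, z) ∈ (if (p.length - 1) % 2 = 0 then K else F)) :
    AltPath K F (p ++ [z]) := by
  refine ⟨by simp, h.2.1.append (List.nodup_singleton z) (by simpa using hz), fun i hi => ?_⟩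
  simp only [List.length_append, List.length_singleton] at hi
  rcases Nat.lt_or_ge (i + 1) p.length with hlt | hge
  · simpa [List.getElem_append_left hlt, List.getElem_append_left (Nat.lt_of_succ_lt hlt)]
      using h.2.2 i hlt
  · obtain rfl : i = p.length - 1 := by omega
    have hp : 0 < p.length := List.length_pos_iff.mpr h.1
    simpa [List.getElem_append_left (Nat.sub_lt hp one_pos), List.getLast_eq_getElem,
      Nat.sub_add_cancel hp] using hedge

lemma reverse (h : AltPath K F p) (hl : p.length % 2 = 1) : AltPath F K p.reverse := by
  refine ⟨by simp [h.1], by simp [h.2.1], fun i hi => ?_⟩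
  simp only [List.length_reverse] at hi
  have := h.2.2 (p.length - 1 - (i + 1)) (by omega)
  simp only [List.getElem_reverse, show p.length - 1 - (i + 1) + 1 = p.length - 1 - i by omega]
    at this ⊢
  rw [Sym2.eq_swap]
  split_ifs at this ⊢ <;> first | exact this | omega

lemma append_tail (hp : AltPath K F p) (hq0 : q ≠ []) (hqnd : q.Nodup)
    (hj : q.head hq0 = p.getLast hp.1) (hdisj : ∀ x ∈ q, x ∈ p → x = q.head hq0)
    (hqe : ∀ j, ∀ hjl : j + 1 < q.length, s(q[j], q[j + 1]) ∈
        (if (j + (p.length - 1)) % 2 = 0 then K else F)) :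
    AltPath K F (p ++ q.tail) := by
  have hpl : 0 < p.length := List.length_pos_iff.mpr hp.1
  refine ⟨by simp [hp.1], hp.2.1.append (hqnd.sublist (List.tail_sublist q)) ?_, fun t ht => ?_⟩
  · intro x hxp hxq
    have hxh := hdisj x (List.mem_of_mem_tail hxq) hxp
    rw [← List.cons_head_tail hq0] at hqnd
    exact (List.nodup_cons.mp hqnd).1 (hxh ▸ hxq)
  rcases Nat.lt_or_ge (t + 1) p.length with hlt | hge
  · simpa [List.getElem_append_left hlt, List.getElem_append_left (Nat.lt_of_succ_lt hlt)]
      using hp.2.2 t hlt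
  · rw [List.getElem_append_tail hp.1 hq0 hj (by omega),
      List.getElem_append_tail hp.1 hq0 hj (by omega)]
    simp only [List.length_append, List.length_tail] at ht
    have := hqe (t - (p.length - 1)) (by omega)
    simpa [show t - (p.length - 1) + 1 = t + 1 - (p.length - 1) by omega,
      show t - (p.length - 1) + (p.length - 1) = t by omega] using this

lemma append_tail_of_odd (hp : AltPath K F p) (hq : AltPath K F q) (hpl : p.length % 2 = 1)
    (hj : q.head hq.1 = p.getLast hp.1) (hdisj : ∀ x ∈ q, x ∈ p → x = q.head hq.1) :
    AltPath K F (p ++ q.tail) :=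
  hp.append_tail hq.1 hq.2.1 hj hdisj fun j hjl => by
    have := hq.2.2 j hjl
    split_ifs at this ⊢ <;> first | exact this | omega

lemma append_tail_of_even (hp : AltPath K F p) (hq : AltPath F K q) (hpl : p.length % 2 = 0)
    (hj : q.head hq.1 = p.getLast hp.1) (hdisj : ∀ x ∈ q, x ∈ p → x = q.head hq.1) :
    AltPath K F (p ++ q.tail) :=
  hp.append_tail hq.1 hq.2.1 hj hdisj fun j hjl => by
    have hp0 : 0 < p.length := List.length_pos_iff.mpr hp.1
    have := hq.2.2 j hjl
    split_ifs at this ⊢ <;> first | exact this | omega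


/-- The `K`-edges of the path pair up all its vertices but the last. -/
lemma notMem_of_mk_mem_of_odd (h : AltPath K F p) (hK : IsMatching K)
    (hl : p.length % 2 = 1) (hz : s(p.getLast h.1, z) ∈ K) : z ∉ p := by
  intro hzp
  obtain ⟨i, hi, rfl⟩ := List.mem_iff_getElem.mp hzp
  rw [List.getLast_eq_getElem] at hz
  have hz' : s(p[i], p[p.length - 1]) ∈ K := by rwa [Sym2.eq_swap]
  rcases Nat.lt_or_ge i (p.length - 1) with hlt | hge
  · rcases Nat.mod_two_eq_zero_or_one i with he | ho
    · have := hK.partner_unique (h.mk_mem_of_even (by omega) he) hz'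
      have := (h.getElem_eq_getElem_iff _ _).mp this
      omega
    · have e := h.mk_mem_of_even (i := i - 1) (by omega) (by omega)
      simp only [Nat.sub_add_cancel (show 1 ≤ i by omega)] at e
      rw [Sym2.eq_swap] at e
      have := (h.getElem_eq_getElem_iff _ _).mp (hK.partner_unique e hz')
      omega
  · obtain rfl : i = p.length - 1 := by omega
    exact hK.ne_of_mk_mem hz rfl

/-- The `F`-edges of the path pair up all its vertices but the first and the last. -/
lemma notMem_of_mk_mem_of_even (h : AltPath K F p) (hF : IsMatching F)
    (hl : p.length % 2 = 0) (h0 : ¬ covered F (p.head h.1)) (hz : s(p.getLast h.1, z) ∈ F) :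
    z ∉ p := by
  intro hzp
  obtain ⟨i, hi, rfl⟩ := List.mem_iff_getElem.mp hzp
  rw [List.getLast_eq_getElem] at hz
  rw [List.head_eq_getElem_zero] at h0
  have hz' : s(p[i], p[p.length - 1]) ∈ F := by rwa [Sym2.eq_swap]
  rcases Nat.lt_or_ge i (p.length - 1) with hlt | hge
  · rcases Nat.mod_two_eq_zero_or_one i with he | ho
    · rcases Nat.eq_zero_or_pos i with rfl | hpos
      · exact h0 (covered_of_mk_mem hz')
      have e := h.mk_mem_of_odd (i := i - 1) (by omega) (by omega)
      simp only [Nat.sub_add_cancel (show 1 ≤ i by omega)] at e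
      rw [Sym2.eq_swap] at e
      have := (h.getElem_eq_getElem_iff _ _).mp (hF.partner_unique e hz')
      omega
    · have := hF.partner_unique (h.mk_mem_of_odd (by omega) ho) hz'
      have := (h.getElem_eq_getElem_iff _ _).mp this
      omega
  · obtain rfl : i = p.length - 1 := by omega
    exact hF.ne_of_mk_mem hz rfl

end AltPath

section sdiff

variable {c : Set V} {M N : Set (Sym2 V)} {r t : V}

lemma AltPath.exists_extend_sdiff (hM : IsMatching M) (hN : IsMatching N)
    (hMc : ∀ e ∈ M, ∀ x ∈ e, x ∈ c) (hNc : ∀ e ∈ N, ∀ x ∈ e, x ∈ c)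
    (hMcov : ∀ x ∈ c, x ≠ t → covered M x) (hNr : ¬ covered N r)
    (hNcov : ∀ x ∈ c, x ≠ r → covered N x)
    {q : List V} (hq : AltPath (M \ N) (N \ M) q) (hhead : q.head hq.1 = r)
    (hcq : ∀ x ∈ q, x ∈ c) (hlen : q.length % 2 = 1) (hlast : q.getLast hq.1 ≠ t) :
    ∃ q' : List V, ∃ hq' : AltPath (M \ N) (N \ M) q',
      q'.head hq'.1 = r ∧ (∀ x ∈ q', x ∈ c) ∧ q'.length = q.length + 2 := by
  have hqMN : AltPath M N q := hq.mono Set.sdiff_subset Set.sdiff_subset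
  obtain ⟨z, hz⟩ := exists_mk_mem_of_covered (hMcov _ (hcq _ (List.getLast_mem hq.1)) hlast)
  have hzq : z ∉ q := hqMN.notMem_of_mk_mem_of_odd hM hlen hz
  have hzN : s(q.getLast hq.1, z) ∉ N := by
    intro hzN
    by_cases h1 : q.length = 1
    · obtain ⟨a, rfl⟩ := List.length_eq_one_iff.mp h1
      simp only [List.getLast_singleton, List.head_cons] at hzN hhead
      exact hNr (hhead ▸ covered_of_mk_mem hzN)
    · have e := hqMN.mk_mem_of_odd (i := q.length - 2) (by omega) (by omega)
      simp only [show q.length - 2 + 1 = q.length - 1 by omega] at e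
      rw [Sym2.eq_swap, ← List.getLast_eq_getElem hq.1] at e
      exact hzq (hN.partner_unique e hzN ▸ List.getElem_mem _)
  have hq1 : AltPath (M \ N) (N \ M) (q ++ [z]) :=
    hq.concat hzq (by rw [if_pos (by omega)]; exact ⟨hz, hzN⟩)
  have hzc : z ∈ c := hMc _ hz z (Sym2.mem_mk_right _ _)
  have hzr : z ≠ r := fun h => hzq (h ▸ hhead ▸ List.head_mem hq.1)
  obtain ⟨y, hy⟩ := exists_mk_mem_of_covered (hNcov z hzc hzr)
  have hhead1 : (q ++ [z]).head hq1.1 = r := by rw [List.head_append_left hq.1, hhead]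
  have hyq : y ∉ q ++ [z] :=
    (hq1.mono Set.sdiff_subset Set.sdiff_subset).notMem_of_mk_mem_of_even hN (by simp; omega)
      (by rwa [hhead1]) (by simpa using hy)
  have hyM : s(z, y) ∉ M := by
    intro hyM
    rw [Sym2.eq_swap] at hz
    exact hyq (List.mem_append_left _ (hM.partner_unique hyM hz ▸ List.getLast_mem hq.1))
  refine ⟨q ++ [z] ++ [y], hq1.concat hyq ?_, ?_, ?_, by simp⟩
  · rw [if_neg (by simp; omega)]
    simpa using ⟨hy, hyM⟩
  · rwa [List.head_append_left hq1.1]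
  · simp only [List.mem_append, List.mem_singleton]
    rintro x ((hx | rfl) | rfl)
    exacts [hcq x hx, hzc, hNc _ hy _ (Sym2.mem_mk_right _ _)]

lemma AltPath.exists_extend_sdiff_to [Fintype V] (hM : IsMatching M) (hN : IsMatching N)
    (hMc : ∀ e ∈ M, ∀ x ∈ e, x ∈ c) (hNc : ∀ e ∈ N, ∀ x ∈ e, x ∈ c)
    (hMcov : ∀ x ∈ c, x ≠ t → covered M x) (hNr : ¬ covered N r)
    (hNcov : ∀ x ∈ c, x ≠ r → covered N x)
    {q : List V} (hq : AltPath (M \ N) (N \ M) q) (hhead : q.head hq.1 = r)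
    (hcq : ∀ x ∈ q, x ∈ c) (hlen : q.length % 2 = 1) :
    ∃ q' : List V, ∃ hq' : AltPath (M \ N) (N \ M) q',
      q'.head hq'.1 = r ∧ q'.getLast hq'.1 = t ∧ q'.length % 2 = 1 ∧ ∀ x ∈ q', x ∈ c := by
  by_cases hlast : q.getLast hq.1 = t
  · exact ⟨q, hq, hhead, hlast, hlen, hcq⟩
  obtain ⟨q', hq', hhead', hcq', hlen'⟩ :=
    hq.exists_extend_sdiff hM hN hMc hNc hMcov hNr hNcov hhead hcq hlen hlast
  have := hq'.2.1.length_le_card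
  exact hq'.exists_extend_sdiff_to hM hN hMc hNc hMcov hNr hNcov hhead' hcq'
    (by omega)
termination_by Fintype.card V - q.length

end sdiff

lemma partner_mem_comp_of_covered {E F : Set (Sym2 V)} {S : Set V} (hF : IsMatching F)
    {w z : V} (hc : covered (edgesIn F (comp (avoid E S) w)) w) (hz : s(w, z) ∈ F) :
    z ∈ comp (avoid E S) w ∧ covered (edgesIn F (comp (avoid E S) z)) z := by
  obtain ⟨e, he, hwe⟩ := hc
  obtain ⟨z', rfl⟩ := Sym2.mem_iff_exists.mp hwe
  obtain rfl := hF.partner_unique hz he.1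
  have hzc : z ∈ comp (avoid E S) w := he.2 z (Sym2.mem_mk_right _ _)
  refine ⟨hzc, covered_of_mk_mem (M := edgesIn _ _) (z := w) ⟨?_, ?_⟩⟩
  · rw [Sym2.eq_swap]; exact he.1
  · rw [comp_eq_of_mem hzc]; simpa [or_comm] using he.2

namespace IsGE

variable {E F : Set (Sym2 V)} {Q R S : Set V}

lemma mem_or_mem_or_mem (hGE : IsGE E F Q R S) (x : V) : x ∈ Q ∨ x ∈ R ∨ x ∈ S := by
  have hx : x ∈ Q ∪ R ∪ S := hGE.1 ▸ Set.mem_univ x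
  rcases hx with (h | h) | h
  exacts [Or.inl h, Or.inr (Or.inl h), Or.inr (Or.inr h)]

lemma notMem_R_of_mem_Q (hGE : IsGE E F Q R S) {x : V} (hx : x ∈ Q) : x ∉ R :=
  Set.disjoint_left.mp hGE.2.1 hx

lemma notMem_S_of_mem_Q (hGE : IsGE E F Q R S) {x : V} (hx : x ∈ Q) : x ∉ S :=
  Set.disjoint_left.mp hGE.2.2.1 hx

lemma notMem_S_of_mem_R (hGE : IsGE E F Q R S) {x : V} (hx : x ∈ R) : x ∉ S :=
  Set.disjoint_left.mp hGE.2.2.2.1 hx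

lemma covered_of_mem_Q (hGE : IsGE E F Q R S) {x : V} (hx : x ∈ Q) : covered F x :=
  covered_mono (edgesIn_subset F Q) (hGE.2.2.2.2.1 x hx)

lemma covered_of_mem_S (hGE : IsGE E F Q R S) {x : V} (hx : x ∈ S) : covered F x :=
  let ⟨_, ht, _⟩ := hGE.2.2.2.2.2.2 x hx
  covered_of_mk_mem ht

lemma comp_subset (hGE : IsGE E F Q R S) {w : V} (hw : w ∈ R) : comp (avoid E S) w ⊆ R :=
  (hGE.2.2.2.2.2.1 w hw).1

lemma mem_S_or_mem_comp (hGE : IsGE E F Q R S) {w z : V} (hw : w ∈ R) (he : s(w, z) ∈ E) :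
    z ∈ S ∨ z ∈ comp (avoid E S) w := by
  refine or_iff_not_imp_left.mpr fun hz => mem_comp_of_mk_mem ⟨he, fun x hx => ?_⟩
  rcases Sym2.mem_iff.mp hx with rfl | rfl
  exacts [hGE.notMem_S_of_mem_R hw, hz]

lemma partner_of_mem_S (hGE : IsGE E F Q R S) (hF : IsMatching F) {x z : V} (hx : x ∈ S)
    (hz : s(x, z) ∈ F) : z ∈ R ∧ ¬ covered (edgesIn F (comp (avoid E S) z)) z := by
  obtain ⟨t, ht, htR, htc⟩ := hGE.2.2.2.2.2.2 x hx
  obtain rfl := hF.partner_unique hz ht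
  exact ⟨htR, htc⟩

lemma eq_of_not_covered (hGE : IsGE E F Q R S) {w x y : V} (hw : w ∈ R)
    (hx : x ∈ comp (avoid E S) w) (hy : y ∈ comp (avoid E S) w)
    (hxu : ¬ covered (edgesIn F (comp (avoid E S) x)) x)
    (hyu : ¬ covered (edgesIn F (comp (avoid E S) y)) y) : x = y := by
  obtain ⟨r, -, hr⟩ := (hGE.2.2.2.2.2.1 w hw).2.2
  rw [hr x ⟨hx, comp_eq_of_mem hx ▸ hxu⟩, hr y ⟨hy, comp_eq_of_mem hy ▸ hyu⟩]

lemma exists_root (hGE : IsGE E F Q R S) {w : V} (hw : w ∈ R) :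
    ∃ r ∈ comp (avoid E S) w, ¬ covered (edgesIn F (comp (avoid E S) r)) r := by
  obtain ⟨r, ⟨hr, hru⟩, -⟩ := (hGE.2.2.2.2.2.1 w hw).2.2
  exact ⟨r, hr, comp_eq_of_mem hr ▸ hru⟩

end IsGE

lemma IsGE.exists_altPath_in_comp [Fintype V] {E F : Set (Sym2 V)} {Q R S : Set V}
    (hF : IsMatching F) (hGE : IsGE E F Q R S) {w t r : V} (hw : w ∈ R)
    (ht : t ∈ comp (avoid E S) w) (hr : r ∈ comp (avoid E S) w)
    (hru : ¬ covered (edgesIn F (comp (avoid E S) r)) r) :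
    ∃ q : List V, ∃ hq : AltPath (E \ F) F q, q.head hq.1 = r ∧ q.getLast hq.1 = t ∧
      q.length % 2 = 1 ∧ ∀ x ∈ q, x ∈ comp (avoid E S) w := by
  set c := comp (avoid E S) w
  obtain ⟨M, hMsub, hM, -, hMcov⟩ := (hGE.2.2.2.2.2.1 w hw).2.1 t ht
  have hNcov : ∀ x ∈ c, x ≠ r → covered (edgesIn F c) x := fun x hx hxr => by
    by_contra hxu
    exact hxr (hGE.eq_of_not_covered hw hx hr (comp_eq_of_mem hx ▸ hxu) hru)
  obtain ⟨q, hq, hh, hl, hlen, hqc⟩ :=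
    (AltPath.singleton _ _ r).exists_extend_sdiff_to hM (hF.of_subset (edgesIn_subset F c))
      (fun e he x hx => (hMsub he).2 x hx) (fun e he x hx => he.2 x hx) hMcov
      (by rwa [comp_eq_of_mem hr] at hru) hNcov rfl (by simpa using hr) rfl
  refine ⟨q, hq.mono ?_ fun e he => he.1.1, hh, hl, hlen, hqc⟩
  rintro e ⟨heM, heN⟩
  exact ⟨(hMsub heM).1, fun heF => heN ⟨heF, (hMsub heM).2⟩⟩

def RespectsComponents (E K : Set (Sym2 V)) (R S : Set V) : Prop :=
  ∀ a b, s(a, b) ∈ K → a ∈ R → b ∈ S ∨ b ∈ comp (avoid E S) a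

section invariant

variable {E F K : Set (Sym2 V)} {Q R S : Set V}

lemma IsGE.respectsComponents_sdiff (hGE : IsGE E F Q R S) : RespectsComponents E (E \ F) R S :=
  fun _ _ h ha => hGE.mem_S_or_mem_comp ha h.1

lemma RespectsComponents.insert (hK : RespectsComponents E K R S) {u v : V}
    (hu : u ∈ R → v ∈ S ∨ v ∈ comp (avoid E S) u)
    (hv : v ∈ R → u ∈ S ∨ u ∈ comp (avoid E S) v) :
    RespectsComponents E (insert s(u, v) K) R S := by
  rintro a b (hab | hab) ha
  · rcases Sym2.eq_iff.mp hab with ⟨rfl, rfl⟩ | ⟨rfl, rfl⟩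
    exacts [hu ha, hv ha]
  · exact hK a b hab ha

lemma IsGE.respectsComponents_insert (hGE : IsGE E F Q R S) {u v : V}
    (h : ¬ ((u ∈ R ∧ v ∈ R ∧ v ∉ comp (avoid E S) u) ∨ (u ∈ R ∧ v ∈ Q) ∨
      (u ∈ Q ∧ v ∈ R))) :
    RespectsComponents E (insert s(u, v) (E \ F)) R S := by
  refine hGE.respectsComponents_sdiff.insert (fun hu => ?_) (fun hv => ?_)
  · rcases hGE.mem_or_mem_or_mem v with hv | hv | hv
    · exact (h (.inr (.inl ⟨hu, hv⟩))).elim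
    · exact .inr (not_not.mp fun hvu => h (.inl ⟨hu, hv, hvu⟩))
    · exact .inl hv
  · rcases hGE.mem_or_mem_or_mem u with hu | hu | hu
    · exact (h (.inr (.inr ⟨hu, hv⟩))).elim
    · exact .inr (not_not.mp fun huv => h (.inl ⟨hu, hv, huv ∘ mem_comp_comm⟩))
    · exact .inl hu

/-- An alternating path from an exposed vertex avoids `Q`, reaches `S` only by `K`-edges, and
enters each component of `G − S` through its exposed vertex. -/
theorem AltPath.ge_invariant (hF : IsMatching F) (hGE : IsGE E F Q R S)
    (hK : RespectsComponents E K R S) {p : List V} (hp : AltPath K F p)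
    (ha : ¬ covered F (p.head hp.1)) (i : ℕ) (hi : i < p.length) :
    p[i] ∉ Q ∧ (p[i] ∈ S → i % 2 = 1) ∧
      (i % 2 = 1 → p[i] ∈ R → covered (edgesIn F (comp (avoid E S) p[i])) p[i]) ∧
      (p[i] ∈ R → ∃ j, ∃ hj : j ≤ i, p[j] ∈ comp (avoid E S) p[i] ∧
        ¬ covered (edgesIn F (comp (avoid E S) p[j])) p[j]) := by
  induction i with
  | zero =>
    rw [List.head_eq_getElem_zero] at ha
    refine ⟨fun h => ha (hGE.covered_of_mem_Q h), fun h => (ha (hGE.covered_of_mem_S h)).elim,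
      by omega, fun _ => ⟨0, le_rfl, mem_comp_self _ _, fun h => ha ?_⟩⟩
    exact covered_mono (edgesIn_subset _ _) h
  | succ i ih =>
    obtain ⟨ihQ, ihS, ihcov, ihroot⟩ := ih (by omega)
    set x := p[i + 1]
    suffices h : (x ∈ S ∧ i % 2 = 0) ∨ (x ∈ R ∧
        ((i + 1) % 2 = 1 → covered (edgesIn F (comp (avoid E S) x)) x) ∧
        ∃ j, ∃ hj : j ≤ i + 1, p[j] ∈ comp (avoid E S) x ∧
          ¬ covered (edgesIn F (comp (avoid E S) p[j])) p[j]) by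
      rcases h with ⟨hxS, hi⟩ | ⟨hxR, hxcov, hxroot⟩
      · exact ⟨fun h => hGE.notMem_S_of_mem_Q h hxS, fun _ => by omega,
          fun _ h => (hGE.notMem_S_of_mem_R h hxS).elim,
          fun h => (hGE.notMem_S_of_mem_R h hxS).elim⟩
      · exact ⟨fun h => hGE.notMem_R_of_mem_Q h hxR,
          fun h => (hGE.notMem_S_of_mem_R hxR h).elim, fun h _ => hxcov h, fun _ => hxroot⟩
    rcases Nat.mod_two_eq_zero_or_one i with he | ho
    · have hwR : p[i] ∈ R := by
        rcases hGE.mem_or_mem_or_mem p[i] with h | h | h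
        exacts [(ihQ h).elim, h, absurd (ihS h) (by omega)]
      rcases hK _ _ (hp.mk_mem_of_even hi he) hwR with hxS | hxc
      · exact Or.inl ⟨hxS, he⟩
      obtain ⟨j, hj, hjc, hju⟩ := ihroot hwR
      refine Or.inr ⟨hGE.comp_subset hwR hxc, fun _ => ?_, j, by omega, ?_, hju⟩
      · by_contra hxu
        have := (hp.getElem_eq_getElem_iff _ _).mp (hGE.eq_of_not_covered hwR hxc hjc hxu hju)
        omega
      · rwa [comp_eq_of_mem hxc]
    · have hwF := hp.mk_mem_of_odd hi ho
      rcases hGE.mem_or_mem_or_mem p[i] with hwQ | hwR | hwS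
      · exact (ihQ hwQ).elim
      · obtain ⟨hxc, -⟩ := partner_mem_comp_of_covered hF (ihcov ho hwR) hwF
        obtain ⟨j, hj, hjc, hju⟩ := ihroot hwR
        refine Or.inr ⟨hGE.comp_subset hwR hxc, by omega, j, by omega, ?_, hju⟩
        rwa [comp_eq_of_mem hxc]
      · obtain ⟨hxR, hxu⟩ := hGE.partner_of_mem_S hF hwS hwF
        exact Or.inr ⟨hxR, by omega, i + 1, le_rfl, mem_comp_self _ _, hxu⟩

lemma ORset_subset_of_respectsComponents (hF : IsMatching F) (hGE : IsGE E F Q R S)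
    (hK : RespectsComponents E K R S) :
    ORset K F ⊆ S ∪ {v ∈ R | covered (edgesIn F (comp (avoid E S) v)) v} := by
  rintro x ⟨a, ha, p, hp0, hp, rfl, rfl, heven⟩
  have hlen : p.length % 2 = 0 := Nat.even_iff.mp heven
  have hpos : 0 < p.length := List.length_pos_iff.mpr hp0
  obtain ⟨hQ, -, hcov, -⟩ := hp.ge_invariant hF hGE hK ha (p.length - 1) (by omega)
  rw [← List.getLast_eq_getElem hp0] at hQ hcov
  rcases hGE.mem_or_mem_or_mem (p.getLast hp0) with h | h | h
  exacts [(hQ h).elim, Or.inr ⟨h, hcov (by omega) h⟩, Or.inl h]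

end invariant

/-- `p` has an even number of edges, so it can be continued by a `K`-edge at `r`. -/
def IsEntryPath (K F : Set (Sym2 V)) (Q C : Set V) (r : V) (p : List V) : Prop :=
  ∃ hp : AltPath K F p, ¬ covered F (p.head hp.1) ∧ p.getLast hp.1 = r ∧ p.length % 2 = 1 ∧
    (∀ x ∈ p, x ∈ C → x = r) ∧ ∀ x ∈ p, x ∉ Q

section entry

variable {E F K : Set (Sym2 V)} {Q R S : Set V}

lemma AltPath.exists_root_index (hF : IsMatching F) (hGE : IsGE E F Q R S)
    (hK : RespectsComponents E K R S) {w : List V} (hw : AltPath K F w)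
    (ha : ¬ covered F (w.head hw.1)) {w₀ : V} (hw₀ : w₀ ∈ R) {k : ℕ} (hk : k < w.length)
    (hkc : w[k] ∈ comp (avoid E S) w₀) :
    ∃ m, ∃ hm : m < w.length, m % 2 = 0 ∧ w[m] ∈ comp (avoid E S) w₀ ∧
      ¬ covered (edgesIn F (comp (avoid E S) w[m])) w[m] ∧
      ∀ l, ∀ hl : l < w.length, w[l] ∈ comp (avoid E S) w₀ → m ≤ l := by
  have inv := hw.ge_invariant hF hGE hK ha
  have root_of_mem : ∀ l, ∀ hl : l < w.length, w[l] ∈ comp (avoid E S) w₀ →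
      ∃ j, ∃ hj : j ≤ l, w[j] ∈ comp (avoid E S) w₀ ∧
        ¬ covered (edgesIn F (comp (avoid E S) w[j])) w[j] := fun l hl hlc => by
    obtain ⟨j, hj, hjc, hju⟩ := (inv l hl).2.2.2 (hGE.comp_subset hw₀ hlc)
    exact ⟨j, hj, comp_eq_of_mem hlc ▸ hjc, hju⟩
  obtain ⟨m, hmk, hmc, hmu⟩ := root_of_mem k hk hkc
  have hmR : w[m] ∈ R := hGE.comp_subset hw₀ hmc
  refine ⟨m, by omega, ?_, hmc, hmu, fun l hl hlc => ?_⟩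
  · by_contra hodd
    exact hmu ((inv m (by omega)).2.2.1 (by omega) hmR)
  · obtain ⟨j, hjl, hjc, hju⟩ := root_of_mem l hl hlc
    have := (hw.getElem_eq_getElem_iff _ _).mp (hGE.eq_of_not_covered hw₀ hjc hmc hju hmu)
    omega

lemma AltPath.exists_isEntryPath_take (hF : IsMatching F) (hGE : IsGE E F Q R S)
    (hK : RespectsComponents E K R S) {w : List V} (hw : AltPath K F w)
    (ha : ¬ covered F (w.head hw.1)) {w₀ : V} (hw₀ : w₀ ∈ R) {k : ℕ} (hk : k < w.length)
    (hkc : w[k] ∈ comp (avoid E S) w₀) :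
    ∃ m, ∃ hm : m < w.length, w[m] ∈ comp (avoid E S) w₀ ∧
      ¬ covered (edgesIn F (comp (avoid E S) w[m])) w[m] ∧
      IsEntryPath K F Q (comp (avoid E S) w₀) w[m] (w.take (m + 1)) := by
  obtain ⟨m, hm, hme, hmc, hmu, hfirst⟩ := hw.exists_root_index hF hGE hK ha hw₀ hk hkc
  have hp := hw.take (Nat.succ_pos m)
  have hlen : (w.take (m + 1)).length = m + 1 := by simp; omega
  refine ⟨m, hm, hmc, hmu, hp, ?_, ?_, by omega, fun x hx hxc => ?_, fun x hx hxQ => ?_⟩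
  · simpa [List.head_eq_getElem_zero] using ha
  · simp [List.getLast_eq_getElem, hlen]
  · obtain ⟨l, hl, rfl⟩ := List.mem_iff_getElem.mp hx
    rw [List.getElem_take] at hxc ⊢
    obtain rfl : l = m := by have := hfirst l (by omega) hxc; omega
    rfl
  · obtain ⟨l, hl, rfl⟩ := List.mem_iff_getElem.mp (List.take_subset _ _ hx)
    exact (hw.ge_invariant hF hGE hK ha l hl).1 hxQ

end entry

section enriching

variable {E F : Set (Sym2 V)} {Q R S : Set V}

lemma ORset_mono {K K' : Set (Sym2 V)} (h : K ⊆ K') : ORset K F ⊆ ORset K' F :=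
  fun _ ⟨a, ha, p, hp0, hp, hh, hl, he⟩ => ⟨a, ha, p, hp0, hp.mono h subset_rfl, hh, hl, he⟩

/-- Either the exposed vertex of the component is exposed by `F`, or its `F`-partner lies in
`S ⊆ OR(K, F)`. -/
lemma exists_isEntryPath (hF : IsMatching F) (hFE : F ⊆ E) (hGE : IsGE E F Q R S)
    (hOR : ORset (E \ F) F = S ∪ {v ∈ R | covered (edgesIn F (comp (avoid E S) v)) v})
    {u : V} (hu : u ∈ R) :
    ∃ r ∈ comp (avoid E S) u, ¬ covered (edgesIn F (comp (avoid E S) r)) r ∧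
      ∃ p, IsEntryPath (E \ F) F Q (comp (avoid E S) u) r p := by
  obtain ⟨r, hr, hru⟩ := hGE.exists_root hu
  suffices ∃ w, ∃ hw : AltPath (E \ F) F w, ¬ covered F (w.head hw.1) ∧ r ∈ w by
    obtain ⟨w, hw, ha, hrw⟩ := this
    obtain ⟨k, hk, rfl⟩ := List.mem_iff_getElem.mp hrw
    obtain ⟨m, hm, hmc, hmu, hp⟩ :=
      hw.exists_isEntryPath_take hF hGE hGE.respectsComponents_sdiff ha hu hk hr
    exact ⟨_, hmc, hmu, _, hp⟩
  by_cases hrF : covered F r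
  · obtain ⟨s, hs⟩ := exists_mk_mem_of_covered hrF
    have hsS : s ∈ S := by
      refine (hGE.mem_S_or_mem_comp (hGE.comp_subset hu hr) (hFE hs)).resolve_right
        fun hsc => hru (covered_of_mk_mem (M := edgesIn _ _) ⟨hs, fun x hx => ?_⟩)
      rcases Sym2.mem_iff.mp hx with rfl | rfl
      exacts [mem_comp_self _ _, hsc]
    obtain ⟨a, ha, w, hw0, hw, rfl, hws, heven⟩ : s ∈ ORset (E \ F) F := hOR ▸ Or.inl hsS
    by_cases hrw : r ∈ w
    · exact ⟨w, hw, ha, hrw⟩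
    refine ⟨w ++ [r], hw.concat hrw ?_, by rwa [List.head_append_left hw0], by simp⟩
    have := Nat.even_iff.mp heven
    have := List.length_pos_iff.mpr hw0
    rw [if_neg (by omega), hws, Sym2.eq_swap]
    exact hs
  · exact ⟨[r], .singleton _ _ r, hrF, List.mem_singleton_self r⟩

lemma IsEntryPath.exists_altPath_to [Fintype V] (hF : IsMatching F) (hGE : IsGE E F Q R S)
    {u r : V} {p : List V} (hu : u ∈ R) (hr : r ∈ comp (avoid E S) u)
    (hru : ¬ covered (edgesIn F (comp (avoid E S) r)) r)
    (hp : IsEntryPath (E \ F) F Q (comp (avoid E S) u) r p) :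
    ∃ P, ∃ hP : AltPath (E \ F) F P, ¬ covered F (P.head hP.1) ∧ P.getLast hP.1 = u ∧
      P.length % 2 = 1 ∧ ∀ x ∈ P, x ∈ p ∨ x ∈ comp (avoid E S) u := by
  obtain ⟨hpa, ha, hpl, hplen, hpc, -⟩ := hp
  obtain ⟨q, hq, hqh, hql, hqlen, hqc⟩ :=
    hGE.exists_altPath_in_comp hF hu (mem_comp_self _ u) hr hru
  have hP := hpa.append_tail_of_odd hq hplen (hqh.trans hpl.symm)
    fun x hxq hxp => hqh ▸ hpc x hxp (hqc x hxq)
  refine ⟨p ++ q.tail, hP, by rwa [List.head_append_left hpa.1], ?_, ?_,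
    fun x hx => (List.mem_or_mem_of_mem_append_tail hx).imp_right (hqc x)⟩
  · rw [List.getLast_append_tail hpa.1 hq.1 (hqh.trans hpl.symm), hql]
  · have := List.length_pos_iff.mpr hq.1
    simp only [List.length_append, List.length_tail]
    omega

lemma mem_ORset_of_concat {K : Set (Sym2 V)} {P : List V} (hP : AltPath K F P)
    (ha : ¬ covered F (P.head hP.1)) (hodd : P.length % 2 = 1) {u v : V}
    (hlast : P.getLast hP.1 = u) (he : s(u, v) ∈ K) (hv : v ∉ P) :
    v ∈ ORset K F := by
  have hP' := hP.concat hv (by rwa [if_pos (by omega), hlast])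
  refine ⟨P.head hP.1, ha, P ++ [v], hP'.1, hP', List.head_append_left hP.1, by simp, ?_⟩
  exact Nat.even_iff.mpr (by simp; omega)

lemma root_mem_ORset [Fintype V] (hF : IsMatching F) (hGE : IsGE E F Q R S)
    {K : Set (Sym2 V)} (hK : E \ F ⊆ K) {P : List V} (hP : AltPath K F P)
    (ha : ¬ covered F (P.head hP.1)) (hodd : P.length % 2 = 1) {u v r : V}
    (hlast : P.getLast hP.1 = u) (he : s(u, v) ∈ K) (hv : v ∈ R)
    (hdisj : ∀ x ∈ P, x ∉ comp (avoid E S) v) (hr : r ∈ comp (avoid E S) v)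
    (hru : ¬ covered (edgesIn F (comp (avoid E S) r)) r) : r ∈ ORset K F := by
  have hP' := hP.concat (fun hvP => hdisj v hvP (mem_comp_self _ v))
    (by rwa [if_pos (by omega), hlast])
  obtain ⟨q, hq, hqh, hql, hqlen, hqc⟩ :=
    hGE.exists_altPath_in_comp hF hv (mem_comp_self _ v) hr hru
  have hq' : AltPath F K q.reverse := (hq.reverse hqlen).mono subset_rfl hK
  have hj : q.reverse.head hq'.1 = (P ++ [v]).getLast hP'.1 := by simp [hql]
  have hglue := hP'.append_tail_of_even hq' (by simp; omega) hj fun x hxq hxP => by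
    rcases List.mem_append.mp hxP with hx | hx
    · exact (hdisj x hx (hqc x (List.mem_reverse.mp hxq))).elim
    · simpa [hql] using hx
  refine ⟨P.head hP.1, ha, _, hglue.1, hglue, ?_, ?_, ?_⟩
  · simp [List.head_append_left hP.1]
  · rw [List.getLast_append_tail hP'.1 hq'.1 hj, List.getLast_reverse, hqh]
  · have := List.length_pos_iff.mpr hq.1
    exact Nat.even_iff.mpr (by simp; omega)

lemma exists_root_mem_ORset_insert [Fintype V] (hF : IsMatching F) (hGE : IsGE E F Q R S)
    {u v r : V} {p : List V} (hu : u ∈ R) (hv : v ∈ R) (hvc : v ∉ comp (avoid E S) u)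
    (hr : r ∈ comp (avoid E S) u) (hru : ¬ covered (edgesIn F (comp (avoid E S) r)) r)
    (hp : IsEntryPath (E \ F) F Q (comp (avoid E S) u) r p)
    (hpv : ∀ x ∈ p, x ∉ comp (avoid E S) v) :
    ∃ r' ∈ comp (avoid E S) v, ¬ covered (edgesIn F (comp (avoid E S) r')) r' ∧
      r' ∈ ORset (insert s(u, v) (E \ F)) F := by
  obtain ⟨P, hP, ha, hlast, hodd, hPp⟩ := hp.exists_altPath_to hF hGE hu hr hru
  obtain ⟨r', hr', hr'u⟩ := hGE.exists_root hv
  refine ⟨r', hr', hr'u, root_mem_ORset hF hGE (Set.subset_insert _ _)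
    (hP.mono (Set.subset_insert _ _) subset_rfl) ha hodd hlast (Set.mem_insert _ _) hv
    (fun x hx hxv => ?_) hr' hr'u⟩
  rcases hPp x hx with hxp | hxu
  exacts [hpv x hxp hxv, hvc (mem_comp_trans hxu (mem_comp_comm hxv))]

lemma notMem_ORset_of_mem_Q (hGE : IsGE E F Q R S)
    (hOR : ORset (E \ F) F = S ∪ {v ∈ R | covered (edgesIn F (comp (avoid E S) v)) v})
    {v : V} (hv : v ∈ Q) : v ∉ ORset (E \ F) F := by
  rw [hOR]
  rintro (h | h)
  exacts [hGE.notMem_S_of_mem_Q hv h, hGE.notMem_R_of_mem_Q hv h.1]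

lemma notMem_ORset_of_not_covered (hGE : IsGE E F Q R S)
    (hOR : ORset (E \ F) F = S ∪ {v ∈ R | covered (edgesIn F (comp (avoid E S) v)) v})
    {r : V} (hr : r ∈ R) (hru : ¬ covered (edgesIn F (comp (avoid E S) r)) r) :
    r ∉ ORset (E \ F) F := by
  rw [hOR]
  rintro (h | h)
  exacts [hGE.notMem_S_of_mem_R hr h, hru h.2]

lemma ORset_ssubset_insert_of_mem_Q [Fintype V] (hF : IsMatching F) (hFE : F ⊆ E)
    (hGE : IsGE E F Q R S)
    (hOR : ORset (E \ F) F = S ∪ {v ∈ R | covered (edgesIn F (comp (avoid E S) v)) v})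
    {u v : V} (hu : u ∈ R) (hv : v ∈ Q) :
    ORset (E \ F) F ⊂ ORset (insert s(u, v) (E \ F)) F := by
  obtain ⟨r, hr, hru, p, hp⟩ := exists_isEntryPath hF hFE hGE hOR hu
  have hpQ : ∀ x ∈ p, x ∉ Q := hp.2.2.2.2.2
  obtain ⟨P, hP, ha, hlast, hodd, hPp⟩ := hp.exists_altPath_to hF hGE hu hr hru
  have hvP : v ∉ P := fun hvP => (hPp v hvP).elim (hpQ v · hv)
    fun hvu => hGE.notMem_R_of_mem_Q hv (hGE.comp_subset hu hvu)
  refine (Set.ssubset_iff_of_subset (ORset_mono (Set.subset_insert _ _))).mpr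
    ⟨v, ?_, notMem_ORset_of_mem_Q hGE hOR hv⟩
  exact mem_ORset_of_concat (hP.mono (Set.subset_insert _ _) subset_rfl) ha hodd hlast
    (Set.mem_insert _ _) hvP

/-- If the entry path into the component of `u` passes through the component of `v`, cut it
at the exposed vertex of the latter and cross the new edge in the other direction. -/
lemma ORset_ssubset_insert_of_notMem_comp [Fintype V] (hF : IsMatching F) (hFE : F ⊆ E)
    (hGE : IsGE E F Q R S)
    (hOR : ORset (E \ F) F = S ∪ {v ∈ R | covered (edgesIn F (comp (avoid E S) v)) v})
    {u v : V} (hu : u ∈ R) (hv : v ∈ R) (hvc : v ∉ comp (avoid E S) u) :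
    ORset (E \ F) F ⊂ ORset (insert s(u, v) (E \ F)) F := by
  obtain ⟨r, hr, hru, p, hp⟩ := exists_isEntryPath hF hFE hGE hOR hu
  suffices ∃ r' ∈ R, ¬ covered (edgesIn F (comp (avoid E S) r')) r' ∧
      r' ∈ ORset (insert s(u, v) (E \ F)) F by
    obtain ⟨r', hr'R, hr'u, hr'OR⟩ := this
    exact (Set.ssubset_iff_of_subset (ORset_mono (Set.subset_insert _ _))).mpr
      ⟨r', hr'OR, notMem_ORset_of_not_covered hGE hOR hr'R hr'u⟩
  by_cases hmeet : ∃ x ∈ p, x ∈ comp (avoid E S) v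
  · obtain ⟨x, hxp, hxv⟩ := hmeet
    obtain ⟨k, hk, rfl⟩ := List.mem_iff_getElem.mp hxp
    obtain ⟨hpa, ha, hpl, -, hpu, -⟩ := hp
    obtain ⟨m, hm, hmv, hmu, hA⟩ :=
      hpa.exists_isEntryPath_take hF hGE hGE.respectsComponents_sdiff ha hv hk hxv
    have hAu : ∀ y ∈ p.take (m + 1), y ∉ comp (avoid E S) u := by
      intro y hy hyu
      obtain ⟨l, hl, rfl⟩ := List.mem_iff_getElem.mp hy
      rw [List.getElem_take] at hyu
      have hlast := hpu _ (List.getElem_mem _) hyu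
      rw [← hpl, List.getLast_eq_getElem, hpa.getElem_eq_getElem_iff] at hlast
      simp only [List.length_take] at hl
      obtain rfl : m = p.length - 1 := by omega
      rw [← List.getLast_eq_getElem hpa.1, hpl] at hmv
      exact hvc (mem_comp_trans hr (mem_comp_comm hmv))
    obtain ⟨r', hr', hr'u, hr'OR⟩ := exists_root_mem_ORset_insert hF hGE hv hu
      (fun huv => hvc (mem_comp_comm huv)) hmv hmu hA hAu
    rw [Sym2.eq_swap] at hr'OR
    exact ⟨r', hGE.comp_subset hu hr', hr'u, hr'OR⟩
  · push Not at hmeet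
    obtain ⟨r', hr', hr'u, hr'OR⟩ :=
      exists_root_mem_ORset_insert hF hGE hu hv hvc hr hru hp hmeet
    exact ⟨r', hGE.comp_subset hv hr', hr'u, hr'OR⟩

end enriching

theorem stmt_14_general {V : Type*} [Fintype V] (E F : Set (Sym2 V)) (Q R S : Set V)
    (hF : IsMaxMatching E F) (hGE : IsGE E F Q R S)
    (hOR : ORset (E \ F) F = S ∪ {v ∈ R | covered (edgesIn F (comp (avoid E S) v)) v})
    (u v : V) :
    ORset (E \ F) F ⊂ ORset (insert s(u, v) (E \ F)) F ↔
      ((u ∈ R ∧ v ∈ R ∧ v ∉ comp (avoid E S) u) ∨ (u ∈ R ∧ v ∈ Q) ∨ (u ∈ Q ∧ v ∈ R)) := by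
  obtain ⟨hFE, hF, -⟩ := hF
  constructor
  · intro hss
    by_contra h
    exact hss.not_subset
      (hOR ▸ ORset_subset_of_respectsComponents hF hGE (hGE.respectsComponents_insert h))
  · rintro (⟨hu, hv, hvc⟩ | ⟨hu, hv⟩ | ⟨hu, hv⟩)
    · exact ORset_ssubset_insert_of_notMem_comp hF hFE hGE hOR hu hv hvc
    · exact ORset_ssubset_insert_of_mem_Q hF hFE hGE hOR hu hv
    · rw [Sym2.eq_swap]
      exact ORset_ssubset_insert_of_mem_Q hF hFE hGE hOR hv hu

/-- given a Gallai–Edmonds decomposition `(Q,R,S)` for the maximum matching `F`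
satisfying `OR(K,F) = S ∪ ⋃ (V(H_i) \ {r_i})` with `K = E \ F`, a non-edge `uv` of `G` is
enriching (adding it strictly enlarges `OR`) iff it joins two distinct components of `G − S`
inside `R`, or joins a component of `R` to `Q`. -/
theorem stmt_14 {V : Type*} [Fintype V] (E F : Set (Sym2 V)) (Q R S : Set V)
    (hE : ∀ e ∈ E, ¬ e.IsDiag) (hF : IsMaxMatching E F) (hGE : IsGE E F Q R S)
    (hOR : ORset (E \ F) F = S ∪ {v ∈ R | covered (edgesIn F (comp (avoid E S) v)) v})
    (u v : V) (huv : u ≠ v) (hnotE : s(u, v) ∉ E) :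
    ORset (E \ F) F ⊂ ORset (insert s(u, v) (E \ F)) F ↔
      ((u ∈ R ∧ v ∈ R ∧ v ∉ comp (avoid E S) u) ∨ (u ∈ R ∧ v ∈ Q) ∨ (u ∈ Q ∧ v ∈ R)) :=
  stmt_14_general E F Q R S hF hGE hOR u v
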